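/- Let f(u) = (-1)^{n₁+n₂-n₁n₂} · (u²-1)^{-(n₁-2)(n₂-2)} / (u⁴-1)^{n₁+n₂-2} for integers n₁, n₂ ≥ 1. Then f(1/u) = (-1)^{n₁+n₂-n₁n₂} · u^{2n₁n₂} · f(u); i.e., f is an absolute automorphic form of weight -2n₁n₂. -/

import Mathlib

open Complex

/-! Substituting `u⁻¹` turns each factor `u ^ m - 1` into `-u ^ (-m) * (u ^ m - 1)`. With
`A = n₁ + n₂ - n₁n₂`, `B = (n₁ - 2)(n₂ - 2)`, `C = n₁ + n₂ - 2`, the extra signs give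
`(-1) ^ (-B - C) = (-1) ^ A` since `-B = A + C - 2`, and the extra powers of `u` give
`u ^ (2B + 4C) = u ^ (2n₁n₂)`. -/

lemma inv_pow_sub_one_zpow {K : Type*} [Field K] {u : K} (hu : u ≠ 0) (m : ℕ) (k : ℤ) :
    (u⁻¹ ^ m - 1) ^ k = (-1) ^ k * u ^ (-(m * k)) * (u ^ m - 1) ^ k := by
  have hm : u⁻¹ ^ m - 1 = -1 * (u ^ m)⁻¹ * (u ^ m - 1) := by
    rw [inv_pow]
    field_simp
    ring
  rw [hm, mul_zpow, mul_zpow, inv_zpow, ← zpow_natCast, ← zpow_mul, ← zpow_neg]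

theorem stmt_10_general (n₁ n₂ : ℕ)
    (f : ℂ → ℂ)
    (hf : ∀ v : ℂ, f v =
      (-1 : ℂ) ^ ((n₁ : ℤ) + n₂ - n₁ * n₂) *
        (v ^ 2 - 1) ^ (-(((n₁ : ℤ) - 2) * ((n₂ : ℤ) - 2))) /
        (v ^ 4 - 1) ^ ((n₁ : ℤ) + n₂ - 2))
    (u : ℂ) (hu : u ≠ 0) :
    f u⁻¹ = (-1 : ℂ) ^ ((n₁ : ℤ) + n₂ - n₁ * n₂) * u ^ (2 * n₁ * n₂) * f u := by
  set A : ℤ := (n₁ : ℤ) + n₂ - n₁ * n₂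
  set B : ℤ := ((n₁ : ℤ) - 2) * ((n₂ : ℤ) - 2)
  set C : ℤ := (n₁ : ℤ) + n₂ - 2
  have hsign : (-1 : ℂ) ^ (-B) = (-1) ^ A * (-1) ^ C := by
    rw [show -B = A + C - 2 by ring, zpow_sub₀ (by norm_num), zpow_add₀ (by norm_num)]
    norm_num
  have hweight : u ^ (-((2 : ℕ) * -B)) = u ^ (2 * n₁ * n₂) * u ^ (-((4 : ℕ) * C)) := by
    rw [← zpow_natCast, ← zpow_add₀ hu]
    congr 1
    push_cast
    ring
  rw [hf, hf, inv_pow_sub_one_zpow hu, inv_pow_sub_one_zpow hu, hsign, hweight]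
  field_simp

theorem stmt_10 (n₁ n₂ : ℕ) (h₁ : 1 ≤ n₁) (h₂ : 1 ≤ n₂)
    (f : ℂ → ℂ)
    (hf : ∀ v : ℂ, f v =
      (-1 : ℂ) ^ ((n₁ : ℤ) + n₂ - n₁ * n₂) *
        (v ^ 2 - 1) ^ (-(((n₁ : ℤ) - 2) * ((n₂ : ℤ) - 2))) /
        (v ^ 4 - 1) ^ ((n₁ : ℤ) + n₂ - 2))
    (u : ℂ) (hu : u ≠ 0) (h4 : u ^ 4 ≠ 1) :
    f u⁻¹ = (-1 : ℂ) ^ ((n₁ : ℤ) + n₂ - n₁ * n₂) * u ^ (2 * n₁ * n₂) * f u :=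
  stmt_10_general n₁ n₂ f hf u hu
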